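/- The sectional curvature of the group D_θ with respect to the bi-invariant metric ⟨X_f,X_h⟩_e = ∫_M f h dμ, in the direction of a 2-plane σ spanned by an orthonormal pair of contact vector fields X_f, X_h, equals K_σ = ¼ ∫_M [f,h]² dμ. In particular K_σ ≥ 0, and K_σ = 0 if and only if the contact Hamiltonians commute, [f,h] = 0. -/
import Mathlib


/-!
Abstract axiomatization of a compact orientable contact metric manifold
`(M, θ, ξ, φ, g)` of dimension `2m+1`.  The type `F` plays the role of the
algebra of smooth functions `C^∞(M)` and the type `V` plays the role of the
space of smooth vector fields `Γ(TM)`.  All classical operators (metric,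
Lie bracket, contact form, Reeb field, gradient, divergence, integration
against the volume form `μ = θ∧(dθ)^m`, the Levi-Civita connection and the
`L²`-orthogonal projection onto contact vector fields) are part of the data,
subject to their usual defining identities.
-/

structure ContactMetricManifold (F V : Type*) [CommRing F] [Algebra ℝ F]
    [AddCommGroup V] [Module ℝ V] : Type _ where
  /-- multiplication of a vector field by a function, `f·X` -/
  fsmul : F → V → V
  /-- the Riemannian metric `g` -/
  g : V → V → F
  /-- the Lie bracket of vector fields -/
  lie : V → V → V
  /-- the derivative `X(f)` of a function along a vector field -/
  D : V → F → F
  /-- the contact form `θ` -/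
  θ : V → F
  /-- the 2-form `dθ` -/
  dθ : V → V → F
  /-- the characteristic (Reeb) vector field `ξ` -/
  ξ : V
  /-- the `(1,1)`-tensor field `φ` -/
  φ : V → V
  /-- the gradient with respect to `g` -/
  grad : F → V
  /-- the divergence with respect to the volume form `μ = θ∧(dθ)^m` -/
  div : V → F
  /-- integration of functions against the volume form `μ = θ∧(dθ)^m` -/
  integral : F → ℝ
  /-- the Levi-Civita connection `∇` of `g` -/
  nabla : V → V → V
  /-- the `L²`-orthogonal projection onto the space of contact vector fields -/
  Pe : V → V
  -- module and derivation axioms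
  fsmul_one : ∀ X, fsmul 1 X = X
  fsmul_add_fun : ∀ f h X, fsmul (f + h) X = fsmul f X + fsmul h X
  fsmul_add_vec : ∀ f X Y, fsmul f (X + Y) = fsmul f X + fsmul f Y
  fsmul_smul : ∀ (a : ℝ) f X, fsmul (a • f) X = a • fsmul f X
  lie_add_left : ∀ X Y Z, lie (X + Y) Z = lie X Z + lie Y Z
  lie_add_right : ∀ X Y Z, lie X (Y + Z) = lie X Y + lie X Z
  lie_skew : ∀ X Y, lie X Y = - lie Y X
  jacobi : ∀ X Y Z, lie X (lie Y Z) = lie (lie X Y) Z + lie Y (lie X Z)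
  D_add_fun : ∀ X f h, D X (f + h) = D X f + D X h
  D_add_vec : ∀ X Y f, D (X + Y) f = D X f + D Y f
  D_smul_vec : ∀ (a : ℝ) X f, D (a • X) f = a • D X f
  D_mul : ∀ X f h, D X (f * h) = D X f * h + f * D X h
  D_const : ∀ X (a : ℝ), D X (algebraMap ℝ F a) = 0
  D_fsmul : ∀ f X h, D (fsmul f X) h = f * D X h
  D_lie : ∀ X Y f, D (lie X Y) f = D X (D Y f) - D Y (D X f)
  θ_add : ∀ X Y, θ (X + Y) = θ X + θ Y
  θ_fsmul : ∀ f X, θ (fsmul f X) = f * θ X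
  g_symm : ∀ X Y, g X Y = g Y X
  g_add_left : ∀ X Y Z, g (X + Y) Z = g X Z + g Y Z
  g_fsmul_left : ∀ f X Y, g (fsmul f X) Y = f * g X Y
  g_smul_left : ∀ (a : ℝ) X Y, g (a • X) Y = a • g X Y
  g_nondeg : ∀ X, (∀ Y, g X Y = 0) → X = 0
  -- contact metric axioms
  θ_ξ : θ ξ = 1
  dθ_ξ : ∀ X, dθ ξ X = 0
  g_ξ : ∀ X, g X ξ = θ X
  φ_φ : ∀ X, φ (φ X) = - X + fsmul (θ X) ξ
  dθ_g_φ : ∀ X Y, dθ X Y = g X (φ Y)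
  dθ_eval : ∀ X Y, dθ X Y = D X (θ Y) - D Y (θ X) - θ (lie X Y)
  grad_spec : ∀ f X, g (grad f) X = D X f
  /-- divergence theorem: `∫ (X f + f div X) dμ = 0` -/
  div_spec : ∀ X f, integral (D X f + div X * f) = 0
  -- integration axioms
  integral_add : ∀ f h, integral (f + h) = integral f + integral h
  integral_smul : ∀ (a : ℝ) f, integral (a • f) = a * integral f
  integral_sq_nonneg : ∀ f, 0 ≤ integral (f * f)
  integral_sq_eq_zero : ∀ f, integral (f * f) = 0 → f = 0
  -- Levi-Civita connection axioms
  nabla_torsion_free : ∀ X Y, nabla X Y - nabla Y X = lie X Y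
  nabla_metric : ∀ X Y Z, D X (g Y Z) = g (nabla X Y) Z + g Y (nabla X Z)
  -- axioms of the `L²`-orthogonal projection onto contact fields
  Pe_contact : ∀ X Y, D (Pe X) (θ Y) = θ (lie (Pe X) Y)
  Pe_fix : ∀ X, (∀ Y, D X (θ Y) = θ (lie X Y)) → Pe X = X
  Pe_orth : ∀ X W, (∀ Y, D W (θ Y) = θ (lie W Y)) → integral (g (X - Pe X) W) = 0

namespace ContactMetricManifold

variable {F V : Type*} [CommRing F] [Algebra ℝ F] [AddCommGroup V] [Module ℝ V]
variable (C : ContactMetricManifold F V)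

/-- the Laplacian `Δ = −div ∘ grad` -/
def lap (f : F) : F := - C.div (C.grad f)

/-- the inertia operator `D = 1 + Δ` -/
def Dop (f : F) : F := f + C.lap f

/-- the contact vector field `X_f = f ξ − φ(grad f)` with contact Hamiltonian `f` -/
def Xf (f : F) : V := C.fsmul f C.ξ - C.φ (C.grad f)

/-- the Lagrange bracket `[f,h] = X_f(h)` of contact Hamiltonians -/
def Lb (f h : F) : F := C.D (C.Xf f) h

/-- `X` is a contact vector field: `L_X θ = 0` -/
def IsContact (X : V) : Prop := ∀ Y, C.D X (C.θ Y) = C.θ (C.lie X Y)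

/-- the bi-invariant pairing `⟨X_f, X_h⟩_e = ∫_M f·h dμ`, written via `f = θ(X_f)` -/
def innerθ (X Y : V) : ℝ := C.integral (C.θ X * C.θ Y)

/-- the `L²` pairing `(X,Y)_e = ∫_M g(X,Y) dμ` -/
def innerL2 (X Y : V) : ℝ := C.integral (C.g X Y)

/-- the metric is `K`-contact: `L_ξ g = 0` -/
def KContact : Prop :=
  ∀ X Y, C.D C.ξ (C.g X Y) = C.g (C.lie C.ξ X) Y + C.g X (C.lie C.ξ Y)

section Aux

variable {F V : Type*} [CommRing F] [Algebra ℝ F] [AddCommGroup V] [Module ℝ V]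
variable (C : ContactMetricManifold F V)

lemma g_zero_left' (Y : V) : C.g 0 Y = 0 := by
  have h : C.g 0 Y + C.g 0 Y = C.g 0 Y + 0 := by
    rw [← C.g_add_left, add_zero, add_zero]
  exact add_left_cancel h

lemma g_neg_left' (X Y : V) : C.g (-X) Y = - C.g X Y := by
  have h : C.g X Y + C.g (-X) Y = 0 := by
    rw [← C.g_add_left, add_neg_cancel, g_zero_left']
  linear_combination h

lemma g_sub_left' (X Y Z : V) : C.g (X - Y) Z = C.g X Z - C.g Y Z := by
  rw [sub_eq_add_neg, C.g_add_left, g_neg_left', sub_eq_add_neg]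

lemma θ_zero' : C.θ 0 = 0 := by
  have h : C.θ 0 + C.θ 0 = C.θ 0 + 0 := by rw [← C.θ_add, add_zero, add_zero]
  exact add_left_cancel h

lemma θ_neg' (X : V) : C.θ (-X) = - C.θ X := by
  have h : C.θ X + C.θ (-X) = 0 := by rw [← C.θ_add, add_neg_cancel, θ_zero']
  linear_combination h

lemma θ_sub' (X Y : V) : C.θ (X - Y) = C.θ X - C.θ Y := by
  rw [sub_eq_add_neg, C.θ_add, θ_neg', sub_eq_add_neg]

/-- antisymmetry of `dθ` -/
lemma dθ_antisymm' (X Y : V) : C.dθ Y X = - C.dθ X Y := by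
  rw [C.dθ_eval, C.dθ_eval, C.lie_skew Y X, θ_neg']
  ring

/-- `θ(φ X) = 0` -/
lemma θ_φ' (X : V) : C.θ (C.φ X) = 0 := by
  rw [← C.g_ξ, C.g_symm, ← C.dθ_g_φ, C.dθ_ξ]

/-- `θ(X_f) = f` -/
lemma θ_Xf' (f : F) : C.θ (C.Xf f) = f := by
  rw [ContactMetricManifold.Xf, θ_sub', C.θ_fsmul, θ_φ', C.θ_ξ, mul_one, sub_zero]

/-- `g(ξ, φ Y) = 0` -/
lemma g_ξ_φ' (Y : V) : C.g C.ξ (C.φ Y) = 0 := by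
  rw [← C.dθ_g_φ, C.dθ_ξ]

/-- the key computation: `dθ(X_f, Y) = - Y(f)` when `ξ(f) = 0`. -/
lemma dθ_Xf' (f : F) (hf : C.D C.ξ f = 0) (Y : V) :
    C.dθ (C.Xf f) Y = - C.D Y f := by
  have h1 : C.g (C.φ (C.grad f)) (C.φ Y) = C.D Y f := by
    have h2 : C.g (C.φ (C.grad f)) (C.φ Y) = C.dθ (C.φ Y) (C.grad f) := by
      rw [C.dθ_g_φ, C.g_symm]
    rw [h2, dθ_antisymm', C.dθ_g_φ, C.φ_φ]
    have h3 : C.g (C.grad f) (-Y + C.fsmul (C.θ Y) C.ξ)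
        = - C.D Y f + C.θ Y * C.D C.ξ f := by
      rw [C.g_symm, C.g_add_left, g_neg_left', C.g_fsmul_left, C.g_symm Y,
        C.g_symm C.ξ, C.grad_spec, C.grad_spec]
    rw [h3, hf]
    ring
  rw [ContactMetricManifold.Xf, C.dθ_g_φ, g_sub_left', C.g_fsmul_left, g_ξ_φ', h1]
  ring

/-- `X_f` is a contact vector field when `ξ(f) = 0`. -/
lemma Xf_contact' (f : F) (hf : C.D C.ξ f = 0) : C.IsContact (C.Xf f) := by
  intro Y
  have h := C.dθ_eval (C.Xf f) Y
  rw [dθ_Xf' C f hf Y, θ_Xf'] at h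
  linear_combination -h

/-- `θ([X_f, X_h]) = [f, h]` -/
lemma θ_lie_Xf' (f h : F) (hf : C.D C.ξ f = 0) :
    C.θ (C.lie (C.Xf f) (C.Xf h)) = C.Lb f h := by
  rw [← Xf_contact' C f hf (C.Xf h), θ_Xf', ContactMetricManifold.Lb]

lemma integral_zero' : C.integral 0 = 0 := by
  have h : C.integral 0 + C.integral 0 = C.integral 0 + 0 := by
    rw [← C.integral_add, add_zero, add_zero]
  exact add_left_cancel h

end Aux

end ContactMetricManifold

open ContactMetricManifold in
/-- The sectional curvature of the group `D_θ` with respect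
to the bi-invariant metric `⟨X_f, X_h⟩_e = ∫_M f·h dμ`, in the direction of a
2-plane `σ` spanned by an orthonormal pair of contact vector fields
`X_f, X_h` — which, for a bi-invariant metric, is
`K_σ = ¼⟨[X_f,X_h],[X_f,X_h]⟩_e` — equals `K_σ = ¼∫_M [f,h]² dμ`.  In
particular `K_σ ≥ 0`, and `K_σ = 0` if and only if the contact Hamiltonians
commute, `[f,h] = 0`. -/
theorem sectional_curvature_biinvariant
    {F V : Type*} [CommRing F] [Algebra ℝ F] [AddCommGroup V] [Module ℝ V]
    (C : ContactMetricManifold F V) (f h : F)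
    (hf : C.D C.ξ f = 0) (hh : C.D C.ξ h = 0)
    (hf1 : C.integral (f * f) = 1) (hh1 : C.integral (h * h) = 1)
    (hfh : C.integral (f * h) = 0) :
    (1/4 : ℝ) * C.innerθ (C.lie (C.Xf f) (C.Xf h)) (C.lie (C.Xf f) (C.Xf h))
        = (1/4 : ℝ) * C.integral (C.Lb f h * C.Lb f h) ∧
    0 ≤ (1/4 : ℝ) * C.innerθ (C.lie (C.Xf f) (C.Xf h)) (C.lie (C.Xf f) (C.Xf h)) ∧
    ((1/4 : ℝ) * C.innerθ (C.lie (C.Xf f) (C.Xf h)) (C.lie (C.Xf f) (C.Xf h)) = 0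
      ↔ C.Lb f h = 0) := by
  have key : C.innerθ (C.lie (C.Xf f) (C.Xf h)) (C.lie (C.Xf f) (C.Xf h))
      = C.integral (C.Lb f h * C.Lb f h) := by
    rw [innerθ, C.θ_lie_Xf' f h hf]
  refine ⟨by rw [key], ?_, ?_⟩
  · rw [key]
    have := C.integral_sq_nonneg (C.Lb f h)
    linarith
  · rw [key]
    constructor
    · intro h0
      exact C.integral_sq_eq_zero _ (by linarith)
    · intro h0
      rw [h0, mul_zero, C.integral_zero', mul_zero]
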